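/- For every even integer n ≥ 4, the symmetric group S_n satisfies γ(S_n) ≤ ⌊(n+4)/4⌋. -/

import Mathlib

/-!
Let `n` be even and `k = ⌊(n + 4) / 4⌋`. The conjugates of the stabilizer of a partition into
two halves, together with those of the stabilizers of sets of sizes `1, 3, …, 2k - 3`, cover
`S_n`. If every cycle of `g` has even length, colouring each cycle alternately gives a set that
`g` maps onto its complement. Otherwise `g` has a cycle of odd length; since `n` is even, this
cycle or its complement is a `g`-invariant set of odd size at most `n / 2`. Size `n / 2` puts
`g` in a conjugate of the partition stabilizer, and a smaller odd size is `2i - 1` with `i < k`.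
-/

/-- The normal covering number γ(G): the smallest `k` such that there exist
proper subgroups `H 1, …, H k` of `G` whose conjugates cover `G`. -/
noncomputable def normalCoveringNumber (G : Type*) [Group G] : ℕ :=
  sInf {k : ℕ | ∃ H : Fin k → Subgroup G, (∀ i, H i ≠ ⊤) ∧
    ∀ g : G, ∃ i, ∃ x : G, x * g * x⁻¹ ∈ H i}

open Equiv MulAction Function Finset Fintype
open scoped Pointwise

theorem normalCoveringNumber_le {G : Type*} [Group G] {k : ℕ} (H : Fin k → Subgroup G)
    (hH : ∀ i, H i ≠ ⊤) (hcover : ∀ g : G, ∃ i, ∃ x : G, x * g * x⁻¹ ∈ H i) :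
    normalCoveringNumber G ≤ k :=
  Nat.sInf_le ⟨H, hH, hcover⟩

theorem MulAction.conj_mem_stabilizer_of_smul_eq {G β : Type*} [Group G] [MulAction G β]
    {a b : β} {x g : G} (hx : x • a = b) (hg : g ∈ stabilizer G a) :
    x * g * x⁻¹ ∈ stabilizer G b := by
  rw [mem_stabilizer_iff] at hg ⊢
  rw [← hx, mul_smul, mul_smul, inv_smul_smul, hg]

namespace Finset

variable {G α : Type*} [Group G] [MulAction G α] [Fintype α] [DecidableEq α]

theorem smul_finset_compl (g : G) (s : Finset α) : g • sᶜ = (g • s)ᶜ := by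
  ext
  simp [← inv_smul_mem_iff]

theorem smul_finset_pair_compl (g : G) (s : Finset α) :
    g • ({s, sᶜ} : Finset (Finset α)) = {g • s, (g • s)ᶜ} := by
  rw [smul_finset_insert, smul_finset_singleton, smul_finset_compl]

theorem mem_stabilizer_pair_compl_iff {g : G} {s : Finset α} :
    g ∈ stabilizer G ({s, sᶜ} : Finset (Finset α)) ↔ g • s = s ∨ g • s = sᶜ := by
  rw [mem_stabilizer_iff, smul_finset_pair_compl]
  constructor
  · intro h
    have hmem : g • s ∈ ({s, sᶜ} : Finset (Finset α)) := h ▸ mem_insert_self _ _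
    simpa using hmem
  · rintro (h | h) <;> rw [h]
    rw [compl_compl, pair_comm]

end Finset

namespace Equiv.Perm

variable {α : Type*}

theorem exists_apply_eq_add_one_of_dvd_minimalPeriod (g : Perm α) {d : ℕ}
    (hd : ∀ x, d ∣ minimalPeriod g x) : ∃ f : α → ZMod d, ∀ x, f (g x) = f x + 1 := by
  -- `f x` is the exponent `k` with `x = g ^ k r`, `r` a chosen point on the cycle of `x`;
  -- it is well defined modulo `d` because `d` divides the period of `r`.
  let S := SameCycle.setoid g
  choose k hk using fun x ↦ (Quotient.mk_out (s := S) x : SameCycle g _ x)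
  refine ⟨fun x ↦ k x, fun x ↦ ?_⟩
  have hrep : Quotient.mk S (g x) = Quotient.mk S x :=
    Quotient.sound (sameCycle_apply_left.mpr (SameCycle.refl g x))
  have hgx : (g ^ k (g x)) (Quotient.mk S x).out = (g ^ (1 + k x)) (Quotient.mk S x).out := by
    rw [← hrep, hk (g x), zpow_one_add, mul_apply, hrep, hk x]
  have hper : (g ^ (k (g x) - (1 + k x))) (Quotient.mk S x).out = (Quotient.mk S x).out := by
    rw [sub_eq_neg_add, zpow_add, mul_apply, hgx, ← mul_apply, ← zpow_add, neg_add_cancel,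
      zpow_zero, one_apply]
  rw [← Perm.smul_def, zpow_smul_eq_iff_minimalPeriod_dvd] at hper
  have := (ZMod.intCast_eq_intCast_iff_dvd_sub (1 + k x) (k (g x)) d).mpr
    ((Int.natCast_dvd_natCast.mpr (hd _)).trans hper)
  simpa [add_comm] using this.symm

variable [DecidableEq α]

theorem exists_smul_finset_eq {s t : Finset α} (h : #s = #t) : ∃ x : Perm α, x • s = t := by
  obtain ⟨x, hx⟩ := (Set.powersetCard.isPretransitive (α := α) (n := #t)).exists_smul_eq
    ⟨s, h⟩ ⟨t, rfl⟩
  exact ⟨x, congrArg Subtype.val hx⟩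

theorem exists_conj_mem_stabilizer_finset {g : Perm α} {s t : Finset α} (hg : g • s = s)
    (h : #s = #t) : ∃ x : Perm α, x * g * x⁻¹ ∈ stabilizer (Perm α) t := by
  obtain ⟨x, hx⟩ := exists_smul_finset_eq h
  exact ⟨x, conj_mem_stabilizer_of_smul_eq hx hg⟩

variable [Fintype α]

theorem exists_smul_finset_eq_compl (g : Perm α) (h : ∀ x, Even (minimalPeriod g x)) :
    ∃ s : Finset α, g • s = sᶜ := by
  obtain ⟨f, hf⟩ :=
    exists_apply_eq_add_one_of_dvd_minimalPeriod g (d := 2) fun x ↦ (h x).two_dvd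
  refine ⟨univ.filter (f · = 0), ?_⟩
  ext y
  have hy : f y = f (g⁻¹ y) + 1 := by simpa using hf (g⁻¹ y)
  rw [← inv_smul_mem_iff]
  simp only [mem_filter, mem_univ, true_and, mem_compl, hy, Perm.smul_def]
  generalize f (g⁻¹ y) = a
  revert a
  decide

theorem exists_smul_finset_eq_self_card_eq_minimalPeriod (g : Perm α) (x : α) :
    ∃ s : Finset α, g • s = s ∧ #s = minimalPeriod g x := by
  classical
  refine ⟨(orbit (Subgroup.zpowers g) x).toFinset, ?_, ?_⟩
  · rw [← coe_inj, coe_smul_finset, Set.coe_toFinset]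
    exact smul_orbit (⟨g, Subgroup.mem_zpowers g⟩ : Subgroup.zpowers g) x
  · rw [Set.toFinset_card]
    exact (minimalPeriod_eq_card (a := g) (b := x)).symm

theorem exists_invariant_odd_or_halving (g : Perm α) (he : Even (card α)) :
    ∃ s : Finset α, (g • s = s ∧ Odd #s ∧ 2 * #s < card α) ∨
      ((g • s = s ∨ g • s = sᶜ) ∧ 2 * #s = card α) := by
  by_cases hall : ∀ x, Even (minimalPeriod g x)
  · obtain ⟨s, hs⟩ := exists_smul_finset_eq_compl g hall
    refine ⟨s, Or.inr ⟨Or.inr hs, ?_⟩⟩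
    have := congrArg card hs
    rw [card_smul_finset, card_compl] at this
    have := card_le_univ s
    omega
  push Not at hall
  obtain ⟨x, hx⟩ := hall
  obtain ⟨s, hgs, hcard⟩ := exists_smul_finset_eq_self_card_eq_minimalPeriod g x
  rw [Nat.not_even_iff_odd, ← hcard] at hx
  rcases lt_trichotomy (2 * #s) (card α) with hlt | heq | hgt
  · exact ⟨s, Or.inl ⟨hgs, hx, hlt⟩⟩
  · exact ⟨s, Or.inr ⟨Or.inl hgs, heq⟩⟩
  · refine ⟨sᶜ, Or.inl ⟨by rw [smul_finset_compl, hgs], ?_, ?_⟩⟩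
    · rw [card_compl]
      exact Nat.Even.sub_odd (card_le_univ s) he hx
    · have := card_le_univ s
      rw [card_compl]
      omega

theorem stabilizer_finset_ne_top {s : Finset α} (hs : 0 < #s) (hs' : #s < card α) :
    stabilizer (Perm α) s ≠ ⊤ := by
  rw [← stabilizer_coe_finset]
  refine stabilizer_ne_top_of_nonempty_of_nonempty_compl (by simpa using hs) ?_
  rw [← coe_compl, coe_nonempty, ← card_pos, card_compl]
  omega

theorem stabilizer_pair_compl_ne_top {s : Finset α} (hs : 1 < #s) (hs' : #s < card α) :
    stabilizer (Perm α) ({s, sᶜ} : Finset (Finset α)) ≠ ⊤ := by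
  obtain ⟨a, ha, b, hb, hab⟩ := one_lt_card.mp hs
  obtain ⟨c, hc⟩ : sᶜ.Nonempty := by rw [← card_pos, card_compl]; omega
  rw [mem_compl] at hc
  have hbc : b ≠ c := by rintro rfl; exact hc hb
  intro htop
  have hc' : c ∈ swap a c • s := by
    simpa [Perm.smul_def] using smul_mem_smul_finset (a := swap a c) ha
  have hb' : b ∈ swap a c • s := by
    simpa [Perm.smul_def, swap_apply_of_ne_of_ne hab.symm hbc] using
      smul_mem_smul_finset (a := swap a c) hb
  rcases mem_stabilizer_pair_compl_iff.mp (htop ▸ Subgroup.mem_top (swap a c)) with h | h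
  · exact hc (h ▸ hc')
  · exact mem_compl.mp (h ▸ hb') hb

theorem exists_conj_mem_stabilizer_pair_compl {g : Perm α} {s t : Finset α}
    (hg : g • s = s ∨ g • s = sᶜ) (h : #s = #t) :
    ∃ x : Perm α, x * g * x⁻¹ ∈ stabilizer (Perm α) ({t, tᶜ} : Finset (Finset α)) := by
  obtain ⟨x, hx⟩ := exists_smul_finset_eq h
  refine ⟨x, conj_mem_stabilizer_of_smul_eq ?_ (mem_stabilizer_pair_compl_iff.mpr hg)⟩
  rw [smul_finset_pair_compl, hx]

theorem normalCoveringNumber_le_of_even (hn : 4 ≤ card α) (he : Even (card α)) :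
    normalCoveringNumber (Perm α) ≤ (card α + 4) / 4 := by
  choose T hT using fun m ↦ exists_subset_card_eq (s := (univ : Finset α)) (min_le_right m _)
  rw [card_univ] at hT
  let H : Fin ((card α + 4) / 4) → Subgroup (Perm α) := fun i ↦
    if (i : ℕ) = 0 then
      stabilizer (Perm α) ({T (card α / 2), (T (card α / 2))ᶜ} : Finset (Finset α))
    else stabilizer (Perm α) (T (2 * i - 1))
  refine normalCoveringNumber_le H (fun i ↦ ?_) (fun g ↦ ?_)
  · have hi := i.isLt
    dsimp only [H]
    split_ifs with h0
    · exact stabilizer_pair_compl_ne_top (by grind) (by grind)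
    · exact stabilizer_finset_ne_top (by grind) (by grind)
  obtain ⟨s, ⟨hgs, hodd, hlt⟩ | ⟨hgs, hhalf⟩⟩ := exists_invariant_odd_or_halving g he
  · obtain ⟨x, hx⟩ := exists_conj_mem_stabilizer_finset hgs
      (t := T (2 * ((#s + 1) / 2) - 1)) (by grind)
    refine ⟨⟨(#s + 1) / 2, by grind⟩, x, ?_⟩
    simpa [H, show (#s + 1) / 2 ≠ 0 by grind] using hx
  · obtain ⟨x, hx⟩ := exists_conj_mem_stabilizer_pair_compl hgs (t := T (card α / 2)) (by grind)
    exact ⟨⟨0, by omega⟩, x, by simpa [H] using hx⟩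

end Equiv.Perm

theorem gamma_sym_even_upper (n : ℕ) (hn : 4 ≤ n) (he : Even n) :
    normalCoveringNumber (Equiv.Perm (Fin n)) ≤ (n + 4) / 4 := by
  simpa using Perm.normalCoveringNumber_le_of_even (α := Fin n) (by simpa) (by simpa)
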